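/- Let {x_k}, {Δ_k} (k = 0,...,T) be generated by the TRFD algorithm. If ψ_{p,Δ_*}(x_k) > ε for k = 0,...,T−1, then Δ_k ≥ Δ_min(ε) := (1−α)θε / (4 L_{h,p} max{σ, L_J} c_{p,2}(m) c_{2,p}(n)²) for k = 0,...,T. -/

import Mathlib

open scoped ENNReal

noncomputable section

/-- The `p`-norm on `ℝ^n`, for `p ∈ [1,∞]`. -/
def pNorm (p : ℝ≥0∞) {n : ℕ} (x : Fin n → ℝ) : ℝ :=
  if p = ∞ then ⨆ i, |x i| else (∑ i, |x i| ^ p.toReal) ^ (1 / p.toReal)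

/-- The Euclidean norm on `ℝ^n`. -/
def eucNorm {n : ℕ} (x : Fin n → ℝ) : ℝ := Real.sqrt (∑ i, x i ^ 2)

/-- The operator norm of a matrix, induced by Euclidean norms. -/
def opNorm2 {m n : ℕ} (A : Matrix (Fin m) (Fin n) ℝ) : ℝ :=
  sSup ((fun v => eucNorm (A.mulVec v)) '' {v | eucNorm v ≤ 1})

/-- Forward finite-difference approximation of the Jacobian of `F` at `x` with stepsize `τ`:
the `j`-th column is `(F (x + τ e_j) - F x) / τ`. -/
def fdMatrix {n m : ℕ} (F : (Fin n → ℝ) → (Fin m → ℝ)) (x : Fin n → ℝ) (τ : ℝ) :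
    Matrix (Fin m) (Fin n) ℝ :=
  Matrix.of fun i j => (F (x + Pi.single j τ) i - F x i) / τ

/-- Stationarity measure `ψ_{p,r}(x)`. -/
def psi {n m : ℕ} (Ω : Set (Fin n → ℝ)) (F : (Fin n → ℝ) → (Fin m → ℝ))
    (h : (Fin m → ℝ) → ℝ) (J : (Fin n → ℝ) → Matrix (Fin m) (Fin n) ℝ)
    (p : ℝ≥0∞) (r : ℝ) (x : Fin n → ℝ) : ℝ :=
  r⁻¹ * (h (F x) -
    sInf ((fun s => h (F x + (J x).mulVec s)) '' {s | x + s ∈ Ω ∧ pNorm p s ≤ r}))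

/-- Approximate stationarity measure `η_{p,r}(x; A)`. -/
def eta {n m : ℕ} (Ω : Set (Fin n → ℝ)) (F : (Fin n → ℝ) → (Fin m → ℝ))
    (h : (Fin m → ℝ) → ℝ) (p : ℝ≥0∞) (r : ℝ) (x : Fin n → ℝ)
    (A : Matrix (Fin m) (Fin n) ℝ) : ℝ :=
  r⁻¹ * (h (F x) -
    sInf ((fun s => h (F x + A.mulVec s)) '' {s | x + s ∈ Ω ∧ pNorm p s ≤ r}))

/-- The TRFD algorithm: `x`, `τ`, `Δ`, `A`, `d`, `ρ` are the iterates, finite-difference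
stepsizes, trust-region radii, finite-difference Jacobian approximations, trial steps and
ratios generated by TRFD with parameters `ε, σ, α, θ, Δstar` from the point `x 0`. -/
def TRFDrun {n m : ℕ} (Ω : Set (Fin n → ℝ)) (F : (Fin n → ℝ) → (Fin m → ℝ))
    (h : (Fin m → ℝ) → ℝ) (p : ℝ≥0∞)
    (Lh cpm cnp ε σ α θ Δstar : ℝ)
    (x : ℕ → Fin n → ℝ) (τ Δ : ℕ → ℝ) (A : ℕ → Matrix (Fin m) (Fin n) ℝ)
    (d : ℕ → Fin n → ℝ) (ρ : ℕ → ℝ) : Prop :=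
  x 0 ∈ Ω ∧
  τ 0 = ε / (Lh * σ * cpm * cnp * Real.sqrt n) ∧
  τ 0 * Real.sqrt n ≤ Δ 0 ∧ Δ 0 ≤ Δstar ∧
  (∀ k, A k = fdMatrix F (x k) (τ k)) ∧
  (∀ k,
    -- unsuccessful iteration of type I
    (eta Ω F h p Δstar (x k) (A k) < ε / 2 ∧
      x (k + 1) = x k ∧ Δ (k + 1) = Δ k ∧ τ (k + 1) = τ k / 2) ∨
    (ε / 2 ≤ eta Ω F h p Δstar (x k) (A k) ∧
      -- the trial step is feasible and achieves a `θ`-fraction of the optimal model decrease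
      pNorm p (d k) ≤ Δ k ∧ x k + d k ∈ Ω ∧
      θ * (h (F (x k)) -
          sInf ((fun s => h (F (x k) + (A k).mulVec s)) ''
            {s | x k + s ∈ Ω ∧ pNorm p s ≤ Δ k})) ≤
        h (F (x k)) - h (F (x k) + (A k).mulVec (d k)) ∧
      ρ k = (h (F (x k)) - h (F (x k + d k))) /
            (h (F (x k)) - h (F (x k) + (A k).mulVec (d k))) ∧
      -- successful iteration
      ((α ≤ ρ k ∧ x (k + 1) = x k + d k ∧ Δ (k + 1) = min (2 * Δ k) Δstar ∧
          τ (k + 1) = τ k) ∨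
      -- unsuccessful iteration of type II
       (ρ k < α ∧ τ k * Real.sqrt n ≤ Δ k / 2 ∧
          x (k + 1) = x k ∧ Δ (k + 1) = Δ k / 2 ∧ τ (k + 1) = τ k) ∨
      -- unsuccessful iteration of type III
       (ρ k < α ∧ Δ k / 2 < τ k * Real.sqrt n ∧
          x (k + 1) = x k ∧ Δ (k + 1) = Δ k / 2 ∧ τ (k + 1) = τ k / 2))))

/-! Fix an unsuccessful iteration k of type II or III. It is not of type I, so
`η_{p,Δ*}(x_k; A_k) ≥ ε/2`, and since `s ↦ h (F x_k + A_k s)` is convex and `0` is feasible,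
shrinking the radius from `Δ*` to `Δ_k` shrinks the optimal model decrease at most
proportionally: the trial step predicts a decrease `D ≥ θ Δ_k ε / 2`. On the other hand the
actual value `h (F (x_k + d_k))` and the model value differ by at most
`L_h c_{p,2} (L_J/2 ‖d_k‖₂² + L_J/2 τ_k √n ‖d_k‖₂) ≤ L_h c_{p,2} L_J c_{2,p}² Δ_k²`
(Taylor with a Lipschitz Jacobian, plus the column-wise finite-difference error, using the
invariant `τ_k √n ≤ Δ_k`). As `ρ_k < α` means this gap exceeds `(1 - α) D`, we get
`Δ_k > 2 Δ_min`, so halving keeps the radius above `Δ_min`; all other iterations do not shrink it,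
and `Δ_0 ≥ τ_0 √n ≥ Δ_min`. -/

open scoped Matrix

theorem norm_image_sub_sub_fderiv_le_of_lipschitz {E G : Type*} [NormedAddCommGroup E]
    [NormedSpace ℝ E] [NormedAddCommGroup G] [NormedSpace ℝ G] {f : E → G}
    {f' : E → E →L[ℝ] G} {L : ℝ} (hf : ∀ y, HasFDerivAt f (f' y) y)
    (hf' : ∀ y z, ‖f' y - f' z‖ ≤ L * ‖y - z‖) (x d : E) :
    ‖f (x + d) - f x - f' x d‖ ≤ L / 2 * ‖d‖ ^ 2 := by
  set g : ℝ → G := fun t => f (x + t • d) - f x - t • f' x d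
  have hg : ∀ t, HasDerivAt g (f' (x + t • d) d - f' x d) t := by
    intro t
    have hline : HasDerivAt (fun t : ℝ => x + t • d) d t := by
      simpa using ((hasDerivAt_id t).smul_const d).const_add x
    exact (((hf _).comp_hasDerivAt t hline).sub_const (f x)).sub
      (by simpa using (hasDerivAt_id t).smul_const (f' x d))
  have hB : ∀ t, HasDerivAt (fun t : ℝ => L * ‖d‖ ^ 2 * (t ^ 2 / 2)) (L * ‖d‖ ^ 2 * t) t := by
    intro t
    exact (((hasDerivAt_pow 2 t).div_const 2).const_mul _).congr_deriv (by push_cast; ring)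
  have hbound : ∀ t ∈ Set.Ico (0 : ℝ) 1, ‖f' (x + t • d) d - f' x d‖ ≤ L * ‖d‖ ^ 2 * t := by
    intro t ht
    calc ‖f' (x + t • d) d - f' x d‖ = ‖(f' (x + t • d) - f' x) d‖ := rfl
      _ ≤ ‖f' (x + t • d) - f' x‖ * ‖d‖ := ContinuousLinearMap.le_opNorm _ _
      _ ≤ L * ‖x + t • d - x‖ * ‖d‖ := by gcongr; exact hf' _ _
      _ = L * ‖d‖ ^ 2 * t := by
        rw [add_sub_cancel_left, norm_smul, Real.norm_of_nonneg ht.1]; ring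
  have := image_norm_le_of_norm_deriv_right_le_deriv_boundary
    (fun t _ => (hg t).continuousAt.continuousWithinAt) (fun t _ => (hg t).hasDerivWithinAt)
    (by simp [g]) hB hbound (x := 1) ⟨zero_le_one, le_rfl⟩
  convert this using 1
  · simp [g]
  · ring

section Norms

open scoped Matrix.Norms.L2Operator

variable {n m : ℕ}

lemma eucNorm_eq_norm (v : Fin n → ℝ) : eucNorm v = ‖WithLp.toLp 2 v‖ := by
  simp [eucNorm, EuclideanSpace.norm_eq, sq_abs]

lemma opNorm2_eq_l2_opNorm (A : Matrix (Fin m) (Fin n) ℝ) : opNorm2 A = ‖A‖ := by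
  rw [Matrix.l2_opNorm_def, ← ContinuousLinearMap.sSup_unitClosedBall_eq_norm, opNorm2]
  congr 1
  ext r
  constructor
  · rintro ⟨v, hv, rfl⟩
    exact ⟨WithLp.toLp 2 v, by simpa [← eucNorm_eq_norm] using hv, by simp [eucNorm_eq_norm]⟩
  · rintro ⟨v, hv, rfl⟩
    exact ⟨WithLp.ofLp v, by simpa [eucNorm_eq_norm] using hv, by
      simp only [eucNorm_eq_norm, LinearEquiv.trans_apply, LinearMap.coe_toContinuousLinearMap']
      rfl⟩

lemma opNorm2_nonneg (A : Matrix (Fin m) (Fin n) ℝ) : 0 ≤ opNorm2 A :=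
  opNorm2_eq_l2_opNorm A ▸ norm_nonneg _

lemma eucNorm_mulVec_le (A : Matrix (Fin m) (Fin n) ℝ) (v : Fin n → ℝ) :
    eucNorm (A *ᵥ v) ≤ opNorm2 A * eucNorm v := by
  simpa [opNorm2_eq_l2_opNorm, eucNorm_eq_norm] using A.l2_opNorm_mulVec (WithLp.toLp 2 v)

lemma eucNorm_smul (t : ℝ) (v : Fin n → ℝ) : eucNorm (t • v) = |t| * eucNorm v := by
  simp [eucNorm_eq_norm, norm_smul]

lemma eucNorm_sub_le (v w : Fin n → ℝ) : eucNorm (v - w) ≤ eucNorm v + eucNorm w := by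
  simpa [eucNorm_eq_norm] using norm_sub_le (WithLp.toLp 2 v) (WithLp.toLp 2 w)

lemma pNorm_eq_norm (p : ℝ≥0∞) [Fact (1 ≤ p)] (v : Fin n → ℝ) :
    pNorm p v = ‖WithLp.toLp p v‖ := by
  rcases eq_or_ne p ∞ with rfl | hp
  · simp [pNorm, PiLp.norm_eq_ciSup]
  · have : 0 < p.toReal := ENNReal.toReal_pos (by have := Fact.out (p := 1 ≤ p); positivity) hp
    simp [pNorm, hp, PiLp.norm_eq_sum this]

theorem eucNorm_sub_sub_mulVec_le {F : (Fin n → ℝ) → (Fin m → ℝ)}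
    {J : (Fin n → ℝ) → Matrix (Fin m) (Fin n) ℝ} {LJ : ℝ}
    (hJ : ∀ y, HasFDerivAt F (LinearMap.toContinuousLinearMap (Matrix.mulVecLin (J y))) y)
    (hJLip : ∀ y z, opNorm2 (J y - J z) ≤ LJ * eucNorm (y - z)) (x d : Fin n → ℝ) :
    eucNorm (F (x + d) - F x - J x *ᵥ d) ≤ LJ / 2 * eucNorm d ^ 2 := by
  let e := EuclideanSpace.equiv (Fin n) ℝ
  let e' := EuclideanSpace.equiv (Fin m) ℝ
  let L := (Matrix.toEuclideanLin (𝕜 := ℝ) (m := Fin m) (n := Fin n)).trans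
    LinearMap.toContinuousLinearMap
  have hf : ∀ y, HasFDerivAt (e'.symm ∘ F ∘ e) (L (J (e y))) y := fun y =>
    (e'.symm.hasFDerivAt.comp y ((hJ (e y)).comp y e.hasFDerivAt)).congr_fderiv
      (by ext; simp [L, e, e', PiLp.coe_continuousLinearEquiv])
  have hf' : ∀ y z, ‖L (J (e y)) - L (J (e z))‖ ≤ LJ * ‖y - z‖ := fun y z => by
    rw [← map_sub]
    change ‖J (e y) - J (e z)‖ ≤ _
    simpa [← opNorm2_eq_l2_opNorm, eucNorm_eq_norm, e, PiLp.coe_continuousLinearEquiv]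
      using hJLip (e y) (e z)
  simpa [eucNorm_eq_norm, L, e, e', PiLp.coe_continuousLinearEquiv] using
    norm_image_sub_sub_fderiv_le_of_lipschitz hf hf' (WithLp.toLp 2 x) (WithLp.toLp 2 d)

end Norms

section FiniteDifference

variable {n m : ℕ}

lemma eucNorm_mulVec_le_sum (M : Matrix (Fin m) (Fin n) ℝ) (v : Fin n → ℝ) :
    eucNorm (M *ᵥ v) ≤ ∑ j, |v j| * eucNorm (Mᵀ j) := by
  rw [Matrix.mulVec_eq_sum]
  simpa [eucNorm_eq_norm, norm_smul] using
    norm_sum_le Finset.univ fun j => v j • WithLp.toLp 2 (Mᵀ j)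

lemma sum_abs_le_sqrt_mul_eucNorm (v : Fin n → ℝ) : ∑ j, |v j| ≤ √n * eucNorm v := by
  simpa [eucNorm, sq_abs, mul_comm] using
    Real.sum_mul_le_sqrt_mul_sqrt Finset.univ (fun j => |v j|) 1

variable {F : (Fin n → ℝ) → (Fin m → ℝ)} {J : (Fin n → ℝ) → Matrix (Fin m) (Fin n) ℝ} {LJ : ℝ}

lemma eucNorm_fdMatrix_col_sub_le
    (hJ : ∀ y, HasFDerivAt F (LinearMap.toContinuousLinearMap (Matrix.mulVecLin (J y))) y)
    (hJLip : ∀ y z, opNorm2 (J y - J z) ≤ LJ * eucNorm (y - z)) {τ : ℝ} (hτ : 0 < τ)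
    (x : Fin n → ℝ) (j : Fin n) :
    eucNorm ((fdMatrix F x τ)ᵀ j - (J x)ᵀ j) ≤ LJ / 2 * τ := by
  have hcol : (fdMatrix F x τ)ᵀ j - (J x)ᵀ j
      = τ⁻¹ • (F (x + Pi.single j τ) - F x - J x *ᵥ Pi.single j τ) := by
    ext i
    simp only [fdMatrix, Pi.sub_apply, Matrix.transpose_apply, Matrix.of_apply,
      Matrix.mulVec_single, op_smul_eq_smul, Pi.smul_apply, Matrix.col_apply, smul_eq_mul]
    field_simp
  have hsingle : eucNorm (Pi.single j τ) = τ := by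
    rw [eucNorm_eq_norm, PiLp.toLp_single, PiLp.norm_single, Real.norm_of_nonneg hτ.le]
  have htaylor := eucNorm_sub_sub_mulVec_le hJ hJLip x (Pi.single j τ)
  rw [hsingle] at htaylor
  rw [hcol, eucNorm_smul, abs_inv, abs_of_pos hτ, inv_mul_le_iff₀ hτ]
  linarith

theorem eucNorm_fdMatrix_sub_mulVec_le
    (hJ : ∀ y, HasFDerivAt F (LinearMap.toContinuousLinearMap (Matrix.mulVecLin (J y))) y)
    (hLJ : 0 ≤ LJ) (hJLip : ∀ y z, opNorm2 (J y - J z) ≤ LJ * eucNorm (y - z))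
    {τ : ℝ} (hτ : 0 < τ) (x v : Fin n → ℝ) :
    eucNorm ((fdMatrix F x τ - J x) *ᵥ v) ≤ LJ / 2 * τ * √n * eucNorm v :=
  calc eucNorm ((fdMatrix F x τ - J x) *ᵥ v)
      ≤ ∑ j, |v j| * eucNorm ((fdMatrix F x τ - J x)ᵀ j) := eucNorm_mulVec_le_sum _ _
    _ ≤ ∑ j, |v j| * (LJ / 2 * τ) := by
      gcongr with j
      exact eucNorm_fdMatrix_col_sub_le hJ hJLip hτ x j
    _ = LJ / 2 * τ * ∑ j, |v j| := by rw [← Finset.sum_mul, mul_comm]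
    _ ≤ LJ / 2 * τ * √n * eucNorm v := by
      rw [mul_assoc _ √n]
      gcongr
      exact sum_abs_le_sqrt_mul_eucNorm v

theorem eucNorm_sub_fdModel_le
    (hJ : ∀ y, HasFDerivAt F (LinearMap.toContinuousLinearMap (Matrix.mulVecLin (J y))) y)
    (hLJ : 0 ≤ LJ) (hJLip : ∀ y z, opNorm2 (J y - J z) ≤ LJ * eucNorm (y - z))
    {τ : ℝ} (hτ : 0 < τ) (x d : Fin n → ℝ) :
    eucNorm (F (x + d) - (F x + fdMatrix F x τ *ᵥ d))
      ≤ LJ / 2 * eucNorm d ^ 2 + LJ / 2 * τ * √n * eucNorm d := by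
  have hsplit : F (x + d) - (F x + fdMatrix F x τ *ᵥ d)
      = (F (x + d) - F x - J x *ᵥ d) - (fdMatrix F x τ - J x) *ᵥ d := by
    rw [Matrix.sub_mulVec]; abel
  rw [hsplit]
  exact (eucNorm_sub_le _ _).trans (add_le_add (eucNorm_sub_sub_mulVec_le hJ hJLip x d)
    (eucNorm_fdMatrix_sub_mulVec_le hJ hLJ hJLip hτ x d))

end FiniteDifference

def modelDecrease {n m : ℕ} (Ω : Set (Fin n → ℝ)) (F : (Fin n → ℝ) → (Fin m → ℝ))
    (h : (Fin m → ℝ) → ℝ) (p : ℝ≥0∞) (x : Fin n → ℝ) (A : Matrix (Fin m) (Fin n) ℝ)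
    (r : ℝ) : ℝ :=
  h (F x) - sInf ((fun s => h (F x + A *ᵥ s)) '' {s | x + s ∈ Ω ∧ pNorm p s ≤ r})

section Model

variable {n m : ℕ} {Ω : Set (Fin n → ℝ)} {F : (Fin n → ℝ) → (Fin m → ℝ)}
  {h : (Fin m → ℝ) → ℝ} {p : ℝ≥0∞} {x : Fin n → ℝ} {A : Matrix (Fin m) (Fin n) ℝ}

lemma eta_eq_modelDecrease (r : ℝ) : eta Ω F h p r x A = r⁻¹ * modelDecrease Ω F h p x A r := rfl

lemma bddBelow_image_model {Lh cnp cpm : ℝ} (hLh : 0 ≤ Lh)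
    (hhLip : ∀ z w, |h z - h w| ≤ Lh * pNorm p (z - w)) (hcnp0 : 0 ≤ cnp) (hcpm0 : 0 ≤ cpm)
    (hcnp : ∀ v : Fin n → ℝ, eucNorm v ≤ cnp * pNorm p v)
    (hcpm : ∀ z : Fin m → ℝ, pNorm p z ≤ cpm * eucNorm z) (r : ℝ) :
    BddBelow ((fun s => h (F x + A *ᵥ s)) '' {s | x + s ∈ Ω ∧ pNorm p s ≤ r}) := by
  refine ⟨h (F x) - Lh * (cpm * (opNorm2 A * (cnp * r))), ?_⟩
  rintro - ⟨s, ⟨-, hs⟩, rfl⟩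
  have hAs : pNorm p (A *ᵥ s) ≤ cpm * (opNorm2 A * (cnp * r)) := by
    refine (hcpm _).trans (mul_le_mul_of_nonneg_left ((eucNorm_mulVec_le A s).trans ?_) hcpm0)
    exact mul_le_mul_of_nonneg_left ((hcnp s).trans (by gcongr)) (opNorm2_nonneg A)
  have hlip := hhLip (F x + A *ᵥ s) (F x)
  rw [add_sub_cancel_left] at hlip
  have := mul_le_mul_of_nonneg_left hAs hLh
  linarith [neg_abs_le (h (F x + A *ᵥ s) - h (F x))]

theorem mul_modelDecrease_le (hp : 1 ≤ p) (hΩ : Convex ℝ Ω) (hx : x ∈ Ω)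
    (hh : ConvexOn ℝ Set.univ h)
    {r R : ℝ} (hbdd : BddBelow ((fun s => h (F x + A *ᵥ s)) '' {s | x + s ∈ Ω ∧ pNorm p s ≤ r}))
    (hr : 0 < r) (hrR : r ≤ R) :
    r * modelDecrease Ω F h p x A R ≤ R * modelDecrease Ω F h p x A r := by
  have : Fact (1 ≤ p) := ⟨hp⟩
  have hR : 0 < R := hr.trans_le hrR
  set t := r / R
  have ht : 0 < t := div_pos hr hR
  have ht1 : t ≤ 1 := (div_le_one hR).mpr hrR
  set mr := sInf ((fun s => h (F x + A *ᵥ s)) '' {s | x + s ∈ Ω ∧ pNorm p s ≤ r})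
  have hscaled : ∀ s, x + s ∈ Ω → pNorm p s ≤ R →
      mr ≤ (1 - t) * h (F x) + t * h (F x + A *ᵥ s) := by
    intro s hs hsR
    have hts : x + t • s ∈ Ω := by
      convert hΩ hx hs (sub_nonneg.mpr ht1) ht.le (by ring) using 1; module
    have htsr : pNorm p (t • s) ≤ r := by
      rw [pNorm_eq_norm] at hsR ⊢
      rw [WithLp.toLp_smul, norm_smul, Real.norm_of_nonneg ht.le]
      calc t * ‖WithLp.toLp p s‖ ≤ t * R := by gcongr
        _ = r := div_mul_cancel₀ r hR.ne'
    calc mr ≤ h (F x + A *ᵥ (t • s)) := csInf_le hbdd ⟨t • s, ⟨hts, htsr⟩, rfl⟩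
      _ = h ((1 - t) • F x + t • (F x + A *ᵥ s)) := by
        rw [Matrix.mulVec_smul]; congr 1; module
      _ ≤ _ := hh.2 trivial trivial (sub_nonneg.mpr ht1) ht.le (by ring)
  have hmR : (mr - (1 - t) * h (F x)) / t
      ≤ sInf ((fun s => h (F x + A *ᵥ s)) '' {s | x + s ∈ Ω ∧ pNorm p s ≤ R}) := by
    refine le_csInf ⟨_, ⟨0, ⟨by simpa using hx, by simpa [pNorm_eq_norm] using hR.le⟩, rfl⟩⟩ ?_
    rintro - ⟨s, ⟨hs, hsR⟩, rfl⟩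
    rw [div_le_iff₀ ht]
    linarith [hscaled s hs hsR]
  rw [div_le_iff₀ ht] at hmR
  have hscale : t * modelDecrease Ω F h p x A R ≤ modelDecrease Ω F h p x A r := by
    rw [modelDecrease, modelDecrease]
    linarith
  calc r * modelDecrease Ω F h p x A R = R * (t * modelDecrease Ω F h p x A R) := by
        rw [← mul_assoc, mul_div_cancel₀ r hR.ne']
    _ ≤ R * modelDecrease Ω F h p x A r := by gcongr

end Model

section TrialStep

variable {n m : ℕ} {Ω : Set (Fin n → ℝ)} {F : (Fin n → ℝ) → (Fin m → ℝ)}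
  {J : (Fin n → ℝ) → Matrix (Fin m) (Fin n) ℝ} {h : (Fin m → ℝ) → ℝ} {p : ℝ≥0∞}
  {LJ Lh cnp cpm : ℝ}

theorem model_error_le
    (hJ : ∀ y, HasFDerivAt F (LinearMap.toContinuousLinearMap (Matrix.mulVecLin (J y))) y)
    (hLJ : 0 ≤ LJ) (hJLip : ∀ y z, opNorm2 (J y - J z) ≤ LJ * eucNorm (y - z))
    (hLh : 0 ≤ Lh) (hhLip : ∀ z w, |h z - h w| ≤ Lh * pNorm p (z - w))
    (hcnp1 : 1 ≤ cnp) (hcpm0 : 0 ≤ cpm)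
    (hcnp : ∀ v : Fin n → ℝ, eucNorm v ≤ cnp * pNorm p v)
    (hcpm : ∀ z : Fin m → ℝ, pNorm p z ≤ cpm * eucNorm z)
    {x d : Fin n → ℝ} {τ Δ : ℝ} (hτ : 0 < τ) (hτΔ : τ * √n ≤ Δ) (hd : pNorm p d ≤ Δ) :
    h (F (x + d)) - h (F x + fdMatrix F x τ *ᵥ d) ≤ Lh * cpm * LJ * cnp ^ 2 * Δ ^ 2 := by
  have hτn : 0 ≤ τ * √n := by positivity
  have hΔ0 : 0 ≤ Δ := hτn.trans hτΔ
  have hd2 : eucNorm d ≤ cnp * Δ := (hcnp d).trans (by gcongr)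
  have hd0 : 0 ≤ eucNorm d := eucNorm_eq_norm d ▸ norm_nonneg _
  have hcnp2 : cnp ≤ cnp ^ 2 := by nlinarith
  have herr : eucNorm (F (x + d) - (F x + fdMatrix F x τ *ᵥ d)) ≤ LJ * cnp ^ 2 * Δ ^ 2 :=
    calc _ ≤ LJ / 2 * eucNorm d ^ 2 + LJ / 2 * (τ * √n) * eucNorm d := by
          simpa only [mul_assoc] using eucNorm_sub_fdModel_le hJ hLJ hJLip hτ x d
      _ ≤ LJ / 2 * (cnp * Δ) ^ 2 + LJ / 2 * Δ * (cnp * Δ) := by gcongr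
      _ ≤ LJ * cnp ^ 2 * Δ ^ 2 := by
        have : LJ / 2 * Δ * (cnp * Δ) ≤ LJ / 2 * cnp ^ 2 * Δ ^ 2 := by
          rw [mul_comm cnp Δ, ← mul_assoc, mul_assoc _ Δ Δ, ← sq, mul_right_comm]
          gcongr
        nlinarith
  calc h (F (x + d)) - h (F x + fdMatrix F x τ *ᵥ d)
      ≤ Lh * pNorm p (F (x + d) - (F x + fdMatrix F x τ *ᵥ d)) := (le_abs_self _).trans (hhLip _ _)
    _ ≤ Lh * (cpm * (LJ * cnp ^ 2 * Δ ^ 2)) := by gcongr; exact (hcpm _).trans (by gcongr)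
    _ = Lh * cpm * LJ * cnp ^ 2 * Δ ^ 2 := by ring

theorem lt_radius_of_ratio_lt (hp : 1 ≤ p) (hΩ : Convex ℝ Ω)
    (hJ : ∀ y, HasFDerivAt F (LinearMap.toContinuousLinearMap (Matrix.mulVecLin (J y))) y)
    (hLJ : 0 ≤ LJ) (hJLip : ∀ y z, opNorm2 (J y - J z) ≤ LJ * eucNorm (y - z))
    (hconv : ConvexOn ℝ Set.univ h)
    (hLh : 0 ≤ Lh) (hhLip : ∀ z w, |h z - h w| ≤ Lh * pNorm p (z - w))
    (hcnp1 : 1 ≤ cnp) (hcpm0 : 0 ≤ cpm)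
    (hcnp : ∀ v : Fin n → ℝ, eucNorm v ≤ cnp * pNorm p v)
    (hcpm : ∀ z : Fin m → ℝ, pNorm p z ≤ cpm * eucNorm z)
    {ε θ α Δstar : ℝ} (hε : 0 < ε) (hθ : 0 < θ) (hα : α < 1)
    {x d : Fin n → ℝ} {τ Δ : ℝ} (hx : x ∈ Ω) (hτ : 0 < τ) (hτΔ : τ * √n ≤ Δ) (hΔ : 0 < Δ)
    (hΔstar : Δ ≤ Δstar)
    (hη : ε / 2 ≤ eta Ω F h p Δstar x (fdMatrix F x τ)) (hd : pNorm p d ≤ Δ)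
    (hθd : θ * modelDecrease Ω F h p x (fdMatrix F x τ) Δ
      ≤ h (F x) - h (F x + fdMatrix F x τ *ᵥ d))
    (hρ : (h (F x) - h (F (x + d))) / (h (F x) - h (F x + fdMatrix F x τ *ᵥ d)) < α) :
    (1 - α) * θ * ε < 2 * Lh * cpm * LJ * cnp ^ 2 * Δ := by
  set D := h (F x) - h (F x + fdMatrix F x τ *ᵥ d)
  have hΔstar0 : 0 < Δstar := hΔ.trans_le hΔstar
  have hdecrease : Δ * (ε / 2) ≤ modelDecrease Ω F h p x (fdMatrix F x τ) Δ := by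
    have hscale := mul_modelDecrease_le (F := F) (A := fdMatrix F x τ) hp hΩ hx hconv
      (bddBelow_image_model hLh hhLip (by linarith) hcpm0 hcnp hcpm Δ) hΔ hΔstar
    rw [eta_eq_modelDecrease, inv_mul_eq_div, le_div_iff₀ hΔstar0] at hη
    refine le_of_mul_le_mul_right ?_ hΔstar0
    calc Δ * (ε / 2) * Δstar = Δ * (ε / 2 * Δstar) := by ring
      _ ≤ Δ * modelDecrease Ω F h p x (fdMatrix F x τ) Δstar := by gcongr
      _ ≤ Δstar * modelDecrease Ω F h p x (fdMatrix F x τ) Δ := hscale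
      _ = _ := mul_comm _ _
  have hD : θ * (Δ * (ε / 2)) ≤ D := (mul_le_mul_of_nonneg_left hdecrease hθ.le).trans hθd
  have hDpos : 0 < D := lt_of_lt_of_le (by positivity) hD
  rw [div_lt_iff₀ hDpos] at hρ
  have hgap := model_error_le (x := x) hJ hLJ hJLip hLh hhLip hcnp1 hcpm0 hcnp hcpm hτ hτΔ hd
  have : (1 - α) * θ * ε * Δ < 2 * Lh * cpm * LJ * cnp ^ 2 * Δ * Δ :=
    calc (1 - α) * θ * ε * Δ = 2 * ((1 - α) * (θ * (Δ * (ε / 2)))) := by ring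
      _ ≤ 2 * ((1 - α) * D) := by gcongr
      _ < 2 * (h (F (x + d)) - h (F x + fdMatrix F x τ *ᵥ d)) := by linarith
      _ ≤ 2 * Lh * cpm * LJ * cnp ^ 2 * Δ * Δ := by linarith
  exact lt_of_mul_lt_mul_right this hΔ.le

end TrialStep

namespace TRFDrun

variable {n m : ℕ} {Ω : Set (Fin n → ℝ)} {F : (Fin n → ℝ) → (Fin m → ℝ)}
  {h : (Fin m → ℝ) → ℝ} {p : ℝ≥0∞} {Lh cpm cnp ε σ α θ Δstar : ℝ}
  {x : ℕ → Fin n → ℝ} {τ Δ : ℕ → ℝ} {A : ℕ → Matrix (Fin m) (Fin n) ℝ}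
  {d : ℕ → Fin n → ℝ} {ρ : ℕ → ℝ}

theorem invariant (hrun : TRFDrun Ω F h p Lh cpm cnp ε σ α θ Δstar x τ Δ A d ρ)
    (hτ0 : 0 < τ 0) (k : ℕ) : x k ∈ Ω ∧ 0 < τ k ∧ τ k * √n ≤ Δ k ∧ Δ k ≤ Δstar := by
  obtain ⟨hx0, -, hτΔ0, hΔ0, -, hstep⟩ := hrun
  induction k with
  | zero => exact ⟨hx0, hτ0, hτΔ0, hΔ0⟩
  | succ k ih =>
    obtain ⟨hxk, hτk, hτΔk, hΔk⟩ := ih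
    have hτn : 0 ≤ τ k * √n := by positivity
    rcases hstep k with ⟨-, hx, hΔ, hτ⟩ | ⟨-, -, hxd, -, -, hcase⟩
    · rw [hx, hΔ, hτ]
      exact ⟨hxk, by positivity, by linarith, hΔk⟩
    · rcases hcase with ⟨-, hx, hΔ, hτ⟩ | ⟨-, hτΔ, hx, hΔ, hτ⟩ | ⟨-, -, hx, hΔ, hτ⟩
      · rw [hx, hΔ, hτ]
        exact ⟨hxd, hτk, le_min (by linarith) (by linarith), min_le_right _ _⟩
      · rw [hx, hΔ, hτ]
        exact ⟨hxk, hτk, hτΔ, by linarith⟩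
      · rw [hx, hΔ, hτ]
        exact ⟨hxk, by positivity, by linarith, by linarith⟩

theorem trial_step_spec (hrun : TRFDrun Ω F h p Lh cpm cnp ε σ α θ Δstar x τ Δ A d ρ) {k : ℕ}
    (hη : ε / 2 ≤ eta Ω F h p Δstar (x k) (A k)) :
    pNorm p (d k) ≤ Δ k ∧
      θ * modelDecrease Ω F h p (x k) (A k) (Δ k) ≤ h (F (x k)) - h (F (x k) + A k *ᵥ d k) ∧
      ρ k = (h (F (x k)) - h (F (x k + d k))) / (h (F (x k)) - h (F (x k) + A k *ᵥ d k)) := by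
  rcases hrun.2.2.2.2.2 k with ⟨hη', -⟩ | ⟨-, hd, -, hθd, hρ, -⟩
  · exact absurd hη hη'.not_ge
  · exact ⟨hd, hθd, hρ⟩

theorem div_le_radius_zero (hrun : TRFDrun Ω F h p Lh cpm cnp ε σ α θ Δstar x τ Δ A d ρ)
    (hn : 0 < √(n : ℝ)) (hε : 0 < ε) (hσ : 0 < σ) (hLh : 0 < Lh) (hcpm : 0 < cpm)
    (hcnp1 : 1 ≤ cnp) (hα0 : 0 ≤ α) (hθ0 : 0 ≤ θ) (hθ1 : θ ≤ 1) {M : ℝ}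
    (hσM : σ ≤ M) :
    (1 - α) * θ * ε / (4 * Lh * M * cpm * cnp ^ 2) ≤ Δ 0 := by
  have hτ0 : τ 0 * √n = ε / (Lh * σ * cpm * cnp) := by rw [hrun.2.1]; field_simp
  refine le_trans ?_ (hτ0 ▸ hrun.2.2.1)
  have hM : 0 < M := hσ.trans_le hσM
  have hgain : (1 - α) * θ ≤ 1 := mul_le_one₀ (by linarith) hθ0 hθ1
  refine div_le_div₀ hε.le (mul_le_of_le_one_left hε.le hgain) (by positivity) ?_
  calc Lh * σ * cpm * cnp ≤ Lh * M * cpm * cnp ^ 2 := by gcongr; nlinarith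
    _ ≤ 4 * Lh * M * cpm * cnp ^ 2 := by
      nlinarith [show 0 < Lh * M * cpm * cnp ^ 2 by positivity]

theorem le_radius (hrun : TRFDrun Ω F h p Lh cpm cnp ε σ α θ Δstar x τ Δ A d ρ) {r : ℝ}
    (hr : 0 ≤ r) (hr0 : r ≤ Δ 0)
    (hshrink : ∀ k, ε / 2 ≤ eta Ω F h p Δstar (x k) (A k) → ρ k < α → 2 * r ≤ Δ k) :
    ∀ k, r ≤ Δ k := by
  obtain ⟨-, -, -, hΔ0, -, hstep⟩ := hrun
  intro k
  induction k with
  | zero => exact hr0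
  | succ k ih =>
    rcases hstep k with ⟨-, -, hΔ, -⟩ | ⟨hη, -, -, -, -, hcase⟩
    · exact hΔ ▸ ih
    · rcases hcase with ⟨-, -, hΔ, -⟩ | ⟨hρ, -, -, hΔ, -⟩ | ⟨hρ, -, -, hΔ, -⟩
      · exact hΔ ▸ le_min (by linarith) (hr0.trans hΔ0)
      · linarith [hshrink k hη hρ]
      · linarith [hshrink k hη hρ]

end TRFDrun

theorem stmt9_general
    {n m : ℕ} (hn : 1 ≤ n) (p : ℝ≥0∞) (hp : 1 ≤ p)
    (Ω : Set (Fin n → ℝ)) (hΩcv : Convex ℝ Ω)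
    (F : (Fin n → ℝ) → (Fin m → ℝ)) (J : (Fin n → ℝ) → Matrix (Fin m) (Fin n) ℝ)
    (hJ : ∀ y, HasFDerivAt F (LinearMap.toContinuousLinearMap (Matrix.mulVecLin (J y))) y)
    (LJ : ℝ) (hLJ : 0 < LJ)
    (hJLip : ∀ y z, opNorm2 (J y - J z) ≤ LJ * eucNorm (y - z))
    (h : (Fin m → ℝ) → ℝ) (hconv : ConvexOn ℝ Set.univ h)
    (Lh : ℝ) (hLh : 0 < Lh)
    (hhLip : ∀ z w, |h z - h w| ≤ Lh * pNorm p (z - w))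
    (cnp cpm : ℝ) (hcnp1 : 1 ≤ cnp) (hcpm1 : 1 ≤ cpm)
    (hcnp : ∀ v : Fin n → ℝ, eucNorm v ≤ cnp * pNorm p v)
    (hcpm : ∀ z : Fin m → ℝ, pNorm p z ≤ cpm * eucNorm z)
    (ε σ α θ Δstar : ℝ) (hε : 0 < ε) (hσ : 0 < σ)
    (hα0 : 0 < α) (hα1 : α < 1) (hθ0 : 0 < θ) (hθ1 : θ ≤ 1)
    (x : ℕ → Fin n → ℝ) (τ Δ : ℕ → ℝ) (A : ℕ → Matrix (Fin m) (Fin n) ℝ)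
    (d : ℕ → Fin n → ℝ) (ρ : ℕ → ℝ)
    (hrun : TRFDrun Ω F h p Lh cpm cnp ε σ α θ Δstar x τ Δ A d ρ)
    (T : ℕ) :
    ∀ k ≤ T, (1 - α) * θ * ε / (4 * Lh * max σ LJ * cpm * cnp ^ 2) ≤ Δ k := by
  have hsqrt : 0 < √(n : ℝ) := Real.sqrt_pos.mpr (by exact_mod_cast hn)
  have hgain : 0 ≤ (1 - α) * θ * ε := mul_nonneg (mul_nonneg (by linarith) hθ0.le) hε.le
  have hbase := hrun.div_le_radius_zero hsqrt hε hσ hLh (by linarith) hcnp1 hα0.le hθ0.le hθ1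
    (le_max_left σ LJ)
  refine fun k _ => hrun.le_radius (div_nonneg hgain (by positivity)) hbase (fun k hη hρ => ?_) k
  obtain ⟨hxk, hτk, hτΔk, hΔk⟩ := hrun.invariant (by rw [hrun.2.1]; positivity) k
  obtain ⟨hd, hθd, hρk⟩ := hrun.trial_step_spec hη
  rw [hrun.2.2.2.2.1 k] at hη hθd hρk
  have hΔ : 0 < Δ k := (mul_pos hτk hsqrt).trans_le hτΔk
  have hlt := lt_radius_of_ratio_lt hp hΩcv hJ hLJ.le hJLip hconv hLh.le hhLip hcnp1 (by linarith)
    hcnp hcpm hε hθ0 hα1 hxk hτk hτΔk hΔ hΔk hη hd hθd (hρk ▸ hρ)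
  rw [← mul_div_assoc, div_le_iff₀ (by positivity)]
  nlinarith [mul_le_mul_of_nonneg_right (le_max_right σ LJ)
    (show 0 ≤ Lh * cpm * cnp ^ 2 * Δ k by positivity)]

/-- Lemma 3.3: lower bound on the trust-region radii. -/
theorem stmt9
    {n m : ℕ} (hn : 1 ≤ n) (hm : 1 ≤ m) (p : ℝ≥0∞) (hp : 1 ≤ p)
    (Ω : Set (Fin n → ℝ)) (hΩne : Ω.Nonempty) (hΩcl : IsClosed Ω) (hΩcv : Convex ℝ Ω)
    (F : (Fin n → ℝ) → (Fin m → ℝ)) (J : (Fin n → ℝ) → Matrix (Fin m) (Fin n) ℝ)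
    (hJ : ∀ y, HasFDerivAt F (LinearMap.toContinuousLinearMap (Matrix.mulVecLin (J y))) y)
    (LJ : ℝ) (hLJ : 0 < LJ)
    (hJLip : ∀ y z, opNorm2 (J y - J z) ≤ LJ * eucNorm (y - z))
    (h : (Fin m → ℝ) → ℝ) (hconv : ConvexOn ℝ Set.univ h)
    (Lh : ℝ) (hLh : 0 < Lh)
    (hhLip : ∀ z w, |h z - h w| ≤ Lh * pNorm p (z - w))
    (cnp cpm : ℝ) (hcnp1 : 1 ≤ cnp) (hcpm1 : 1 ≤ cpm)
    (hcnp : ∀ v : Fin n → ℝ, eucNorm v ≤ cnp * pNorm p v)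
    (hcpm : ∀ z : Fin m → ℝ, pNorm p z ≤ cpm * eucNorm z)
    (ε σ α θ Δstar : ℝ) (hε : 0 < ε) (hσ : 0 < σ)
    (hα0 : 0 < α) (hα1 : α < 1) (hθ0 : 0 < θ) (hθ1 : θ ≤ 1)
    (x : ℕ → Fin n → ℝ) (τ Δ : ℕ → ℝ) (A : ℕ → Matrix (Fin m) (Fin n) ℝ)
    (d : ℕ → Fin n → ℝ) (ρ : ℕ → ℝ)
    (hrun : TRFDrun Ω F h p Lh cpm cnp ε σ α θ Δstar x τ Δ A d ρ)
    (T : ℕ) (hT : ∀ k < T, ε < psi Ω F h J p Δstar (x k)) :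
    ∀ k ≤ T, (1 - α) * θ * ε / (4 * Lh * max σ LJ * cpm * cnp ^ 2) ≤ Δ k :=
  stmt9_general hn p hp Ω hΩcv F J hJ LJ hLJ hJLip h hconv Lh hLh hhLip cnp cpm hcnp1 hcpm1 hcnp
    hcpm ε σ α θ Δstar hε hσ hα0 hα1 hθ0 hθ1 x τ Δ A d ρ hrun T
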